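/- Let E_k = (C^3)_{-k} ∈ Q[C_{-1},...,C_{-(m+1)}] for k = 1,...,m-1, and order monomials by the weighted degree reverse lexicographic order with weights w(C_{-i}) = i+1 (largest variable C_{-(m+1)}). Then the leading term of E_k is 3C_{-(k+2)}, and since these leading terms are pairwise coprime, {E_1, ..., E_{m-1}} is a Groebner basis of the ideal it generates. -/

import Mathlib

/-- The generic Laurent series `C = x + ∑_{i≥1} C₋ᵢ x⁻ⁱ` with indeterminate
coefficients `C₋ᵢ = X i`, modelled in the variable `u = x⁻¹`. -/
noncomputable def genC : LaurentSeries (MvPolynomial ℕ ℚ) :=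
  HahnSeries.single (-1 : ℤ) 1 +
    HahnSeries.ofPowerSeries ℤ (MvPolynomial ℕ ℚ)
      (PowerSeries.mk fun i => if i = 0 then 0 else MvPolynomial.X i)

/-- The weight of a monomial `∏ C₋ᵢ^{aᵢ}` for the weights `w(C₋ᵢ) = i + 1`. -/
def wdeg (d : ℕ →₀ ℕ) : ℕ := d.sum fun i a => a * (i + 1)

/-- The weighted degree reverse lexicographic order (weights `w(C₋ᵢ) = i + 1`,
variables ordered `C₋₁ < C₋₂ < ⋯`): `d` is smaller than `e` iff `d` has smaller
weight, or the weights agree and at the smallest variable where the exponents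
differ, `d` has the *larger* exponent. -/
def wdrlLt (d e : ℕ →₀ ℕ) : Prop :=
  wdeg d < wdeg e ∨ (wdeg d = wdeg e ∧ ∃ i, e i < d i ∧ ∀ j < i, d j = e j)

/-- `d` is the leading monomial of `p` for the order `wdrlLt`. -/
def IsLeadingMonomial (p : MvPolynomial ℕ ℚ) (d : ℕ →₀ ℕ) : Prop :=
  d ∈ p.support ∧ ∀ e ∈ p.support, e ≠ d → wdrlLt e d

/-!
Write `C = x + P` with `P = ∑ C₋ᵢ x⁻ⁱ`. Expanding the cube gives `Eₖ = 3 C₋₍ₖ₊₂₎ + Tₖ` with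
`Tₖ = 3 (P²)₋₍ₖ₊₁₎ + (P³)₋ₖ`. Grading by weight shows that `Tₖ` has weight `k + 3`, like
`C₋₍ₖ₊₂₎`, and grading by the sum of the indices shows that it only involves `C₋ᵢ` with
`i ≤ k + 1`; so all its monomials are smaller than `C₋₍ₖ₊₂₎` in the reverse lexicographic order.

For the Groebner basis property, solve `Eₖ = 0` recursively for `C₋₍ₖ₊₂₎`. This gives a
substitution `σ` that kills the ideal, sends `C₋ⱼ` (`3 ≤ j ≤ m + 1`) to a polynomial of weight
`j + 1` in `C₋₁, C₋₂`, and fixes the other variables. Hence `σ` fixes every monomial not divisible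
by some `C₋₍ₖ₊₂₎`, and moves every other monomial to a combination of strictly smaller ones
(same weight, eliminated variables traded for smaller ones). If the leading monomial `d` of some
`p` in the ideal were of the first kind, the coefficient of `d` in `σ p = 0` would be that of `p`.
-/

open MvPolynomial

lemma wdeg_eq_weight (d : ℕ →₀ ℕ) : wdeg d = Finsupp.weight (fun i => i + 1) d := rfl

lemma wdeg_add (d e : ℕ →₀ ℕ) : wdeg (d + e) = wdeg d + wdeg e := by
  simp only [wdeg_eq_weight, map_add]

lemma wdeg_lt_wdeg {d e : ℕ →₀ ℕ} (h : d < e) : wdeg d < wdeg e := by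
  have := Finsupp.nonTorsionWeight_of ℕ (w := fun i : ℕ => i + 1) fun i => i.succ_ne_zero
  have hpos : wdeg (e - d) ≠ 0 := by
    rw [wdeg_eq_weight, Ne, Finsupp.weight_eq_zero_iff_eq_zero, tsub_eq_zero_iff_le]
    exact h.not_ge
  rw [← add_tsub_cancel_of_le h.le, wdeg_add]
  omega

lemma wdrlLt_of_ge_on_Iio_of_le_on_Ici {d e : ℕ →₀ ℕ} (n : ℕ) (hw : wdeg e = wdeg d)
    (hne : e ≠ d) (hlow : ∀ j < n, d j ≤ e j) (hhigh : ∀ j, n ≤ j → e j ≤ d j) : wdrlLt e d := by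
  by_cases hagree : ∀ j < n, e j = d j
  · have hle : e ≤ d := fun j => if hj : j < n then (hagree j hj).le else hhigh j (not_lt.1 hj)
    exact absurd hw (wdeg_lt_wdeg (lt_of_le_of_ne hle hne)).ne
  · push Not at hagree
    have hex : ∃ i, i < n ∧ e i ≠ d i := hagree
    refine Or.inr ⟨hw, Nat.find hex, ?_, fun j hj => ?_⟩
    · obtain ⟨hi, hne⟩ := Nat.find_spec hex
      exact lt_of_le_of_ne (hlow _ hi) hne.symm
    · have hjn : j < n := hj.trans (Nat.find_spec hex).1
      exact by_contra fun h => Nat.find_min hex hj ⟨hjn, h⟩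

lemma wdrlLt_asymm {d e : ℕ →₀ ℕ} (h : wdrlLt d e) : ¬ wdrlLt e d := by
  rintro (h' | ⟨hw', i', hi', hji'⟩) <;> rcases h with h | ⟨hw, i, hi, hji⟩
  · omega
  · omega
  · omega
  · rcases lt_trichotomy i i' with hii | rfl | hii
    · have := hji' i hii; omega
    · omega
    · have := hji i' hii; omega

section Homogeneity

variable {σ τ R M : Type*} [CommSemiring R] [AddCommMonoid M]

lemma MvPolynomial.IsWeightedHomogeneous.aeval {w : σ → M} {w' : τ → M} {φ : MvPolynomial σ R}
    {n : M} (hφ : IsWeightedHomogeneous w φ n) {g : σ → MvPolynomial τ R}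
    (hg : ∀ i ∈ φ.vars, IsWeightedHomogeneous w' (g i) (w i)) :
    IsWeightedHomogeneous w' (aeval g φ) n := by
  rw [aeval_def, eval₂_eq]
  refine IsWeightedHomogeneous.sum _ _ _ fun d hd => ?_
  have hprod := IsWeightedHomogeneous.prod d.support (fun i => g i ^ d i) (fun i => d i • w i)
    fun i hi => (hg i ((mem_vars_iff_mem_support i).mpr ⟨d, hd, hi⟩)).pow (d i)
  rw [← hφ (mem_support_iff.mp hd)]
  simpa [Finsupp.weight_apply, Finsupp.sum] using hprod.C_mul (coeff d φ)

lemma isWeightedHomogeneous_coeff_mul {w : σ → M} {c a b : M}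
    {A B : PowerSeries (MvPolynomial σ R)}
    (hA : ∀ n, IsWeightedHomogeneous w (PowerSeries.coeff n A) (n • c + a))
    (hB : ∀ n, IsWeightedHomogeneous w (PowerSeries.coeff n B) (n • c + b)) (n : ℕ) :
    IsWeightedHomogeneous w (PowerSeries.coeff n (A * B)) (n • c + (a + b)) := by
  rw [PowerSeries.coeff_mul]
  refine IsWeightedHomogeneous.sum _ _ _ fun x hx => ?_
  rw [← Finset.HasAntidiagonal.mem_antidiagonal.mp hx]
  convert (hA x.1).mul (hB x.2) using 1
  rw [add_smul]
  abel

lemma isWeightedHomogeneous_coeff_pow {w : σ → M} {c a : M}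
    {A : PowerSeries (MvPolynomial σ R)}
    (hA : ∀ n, IsWeightedHomogeneous w (PowerSeries.coeff n A) (n • c + a)) (j n : ℕ) :
    IsWeightedHomogeneous w (PowerSeries.coeff n (A ^ j)) (n • c + j • a) := by
  induction j generalizing n with
  | zero =>
    rw [pow_zero, PowerSeries.coeff_one]
    split_ifs with hn
    · simpa [hn] using isWeightedHomogeneous_one R w
    · exact isWeightedHomogeneous_zero R w _
  | succ j ih => simpa [pow_succ, succ_nsmul] using isWeightedHomogeneous_coeff_mul ih hA n

end Homogeneity

noncomputable def genP : PowerSeries (MvPolynomial ℕ ℚ) :=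
  PowerSeries.mk fun i => if i = 0 then 0 else X i

noncomputable def cubeTail (k : ℕ) : MvPolynomial ℕ ℚ :=
  3 * PowerSeries.coeff (k + 1) (genP ^ 2) + PowerSeries.coeff k (genP ^ 3)

lemma genC_eq_single_mul_ofPowerSeries :
    genC = HahnSeries.single (-1) 1 * HahnSeries.ofPowerSeries ℤ _ (1 + PowerSeries.X * genP) := by
  rw [map_add, map_mul, HahnSeries.ofPowerSeries_X, mul_add, ← mul_assoc,
    HahnSeries.single_mul_single]
  simp [genC, genP]

lemma coeff_genC_pow_three (k : ℕ) : (genC ^ 3).coeff (k : ℤ) = 3 * X (k + 2) + cubeTail k := by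
  have hk : (k : ℤ) = ((k + 3 : ℕ) : ℤ) + 3 • (-1) := by push_cast; ring
  rw [genC_eq_single_mul_ofPowerSeries, mul_pow, HahnSeries.single_pow, one_pow, ← map_pow, hk,
    HahnSeries.coeff_single_mul_add, one_mul, HahnSeries.ofPowerSeries_apply_coeff,
    show (1 + PowerSeries.X * genP) ^ 3 = 1 + PowerSeries.X *
      (3 • genP + PowerSeries.X * (3 • genP ^ 2 + PowerSeries.X * genP ^ 3)) by ring]
  simp only [map_add, map_nsmul, PowerSeries.coeff_succ_X_mul, PowerSeries.coeff_one]
  simp [cubeTail, genP, nsmul_eq_mul]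

lemma isWeightedHomogeneous_coeff_genP {M : Type*} [AddCommMonoid M] {w : ℕ → M} {c a : M}
    (hw : ∀ i, w i = i • c + a) (n : ℕ) :
    IsWeightedHomogeneous w (PowerSeries.coeff n genP) (n • c + a) := by
  rw [genP, PowerSeries.coeff_mk]
  split_ifs
  · exact isWeightedHomogeneous_zero _ _ _
  · rw [← hw]
    exact isWeightedHomogeneous_X _ _ _

lemma isWeightedHomogeneous_cubeTail (k : ℕ) :
    IsWeightedHomogeneous (fun i => i + 1) (cubeTail k) (k + 3) := by
  have h := isWeightedHomogeneous_coeff_pow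
    (isWeightedHomogeneous_coeff_genP (w := fun i => i + 1) (c := 1) (a := 1) (by simp))
  refine IsWeightedHomogeneous.add ?_ ?_
  · rw [← map_ofNat C 3]
    convert (h 2 (k + 1)).C_mul 3 using 1
    simp only [smul_eq_mul]
    ring
  · convert h 3 k using 1
    simp only [smul_eq_mul]
    ring

lemma lt_of_mem_vars_cubeTail {k i : ℕ} (hi : i ∈ (cubeTail k).vars) : i < k + 2 := by
  obtain ⟨e, he, hie⟩ := (mem_vars_iff_mem_support i).mp hi
  -- `Finsupp.weight id` is the sum of the indices; it equals `n` on `coeff n (genP ^ j)`.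
  have hweight : ∀ j n, coeff e (PowerSeries.coeff n (genP ^ j)) ≠ 0 →
      Finsupp.weight id e = n := fun j n h => by
    simpa using isWeightedHomogeneous_coeff_pow
      (isWeightedHomogeneous_coeff_genP (w := id) (c := 1) (a := 0) (by simp)) j n h
  have hle : Finsupp.weight id e ≤ k + 1 := by
    rw [mem_support_iff, cubeTail, coeff_add, ← map_ofNat C 3, coeff_C_mul] at he
    by_cases h : coeff e (PowerSeries.coeff (k + 1) (genP ^ 2)) = 0
    · rw [h, mul_zero, zero_add] at he
      rw [hweight 3 k he]
      omega
    · rw [hweight 2 (k + 1) h]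
  have := Finsupp.le_weight_of_ne_zero' id (Finsupp.mem_support_iff.mp hie)
  simp only [id] at this
  omega

lemma coeff_single_cubeTail (k : ℕ) : coeff (Finsupp.single (k + 2) 1) (cubeTail k) = 0 := by
  by_contra h
  have := lt_of_mem_vars_cubeTail ((mem_vars_iff_mem_support (k + 2)).mpr
    ⟨_, mem_support_iff.mpr h, by simp⟩)
  omega

lemma coeff_genC_pow_three_single (k : ℕ) :
    ((genC ^ 3).coeff (k : ℤ)).coeff (Finsupp.single (k + 2) 1) = 3 := by
  rw [coeff_genC_pow_three, coeff_add, coeff_single_cubeTail, ← map_ofNat C 3, coeff_C_mul,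
    coeff_X, if_pos rfl, mul_one, add_zero]

lemma isLeadingMonomial_genC_pow_three (k : ℕ) :
    IsLeadingMonomial ((genC ^ 3).coeff (k : ℤ)) (Finsupp.single (k + 2) 1) := by
  refine ⟨by rw [mem_support_iff, coeff_genC_pow_three_single]; norm_num, fun e he hne => ?_⟩
  have he' : coeff e (cubeTail k) ≠ 0 := by
    rwa [mem_support_iff, coeff_genC_pow_three, coeff_add, ← map_ofNat C 3, coeff_C_mul,
      coeff_X, if_neg (Ne.symm hne), mul_zero, zero_add] at he
  refine wdrlLt_of_ge_on_Iio_of_le_on_Ici (k + 2) ?_ hne (fun j hj => ?_) (fun j hj => ?_)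
  · rw [wdeg_eq_weight, wdeg_eq_weight, isWeightedHomogeneous_cubeTail k he',
      Finsupp.weight_single, smul_eq_mul, one_mul]
  · simp [hj.ne']
  · by_contra h
    have := lt_of_mem_vars_cubeTail ((mem_vars_iff_mem_support j).mpr
      ⟨e, mem_support_iff.mpr he', Finsupp.mem_support_iff.mpr (by omega)⟩)
    omega

/-- Solves `(C³)₋₍ⱼ₋₂₎ = 3 X j + cubeTail (j - 2) = 0` for `X j` when `3 ≤ j ≤ N`; the guard
`i < j` only serves termination, since `cubeTail (j - 2)` involves only variables below `j`. -/
noncomputable def elimSubst (N j : ℕ) : MvPolynomial ℕ ℚ :=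
  if 3 ≤ j ∧ j ≤ N then
    -(3 : ℚ)⁻¹ • aeval (fun i => if _ : i < j then elimSubst N i else X i) (cubeTail (j - 2))
  else X j
termination_by j

section elimSubst

variable {N j : ℕ}

lemma elimSubst_eq_X (h : ¬(3 ≤ j ∧ j ≤ N)) : elimSubst N j = X j := by
  rw [elimSubst, if_neg h]

lemma elimSubst_eq_aeval (h3 : 3 ≤ j) (hN : j ≤ N) :
    elimSubst N j = -(3 : ℚ)⁻¹ • aeval (elimSubst N) (cubeTail (j - 2)) := by
  rw [elimSubst, if_pos ⟨h3, hN⟩]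
  congr 1
  refine eval₂Hom_congr' rfl (fun i hi _ => ?_) rfl
  have := lt_of_mem_vars_cubeTail hi
  rw [dif_pos (by omega)]

lemma isWeightedHomogeneous_elimSubst (N j : ℕ) :
    IsWeightedHomogeneous (fun i => i + 1) (elimSubst N j) (j + 1) := by
  induction j using Nat.strong_induction_on with
  | _ j ih =>
    by_cases h : 3 ≤ j ∧ j ≤ N
    · rw [elimSubst_eq_aeval h.1 h.2, smul_eq_C_mul]
      convert ((isWeightedHomogeneous_cubeTail (j - 2)).aeval fun i hi =>
        ih i (by have := lt_of_mem_vars_cubeTail hi; omega)).C_mul _ using 1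
      omega
    · rw [elimSubst_eq_X h]
      exact isWeightedHomogeneous_X _ _ _

lemma lt_three_of_mem_vars_elimSubst (h3 : 3 ≤ j) (hN : j ≤ N) :
    ∀ i ∈ (elimSubst N j).vars, i < 3 := by
  induction j using Nat.strong_induction_on with
  | _ j ih =>
    intro i hi
    rw [elimSubst_eq_aeval h3 hN, smul_eq_C_mul, vars_C_mul _ (by norm_num)] at hi
    obtain ⟨l, hl, hil⟩ := mem_vars_bind₁ _ _ hi
    have hlj := lt_of_mem_vars_cubeTail hl
    by_cases h : 3 ≤ l
    · exact ih l (by omega) h (by omega) i hil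
    · rw [elimSubst_eq_X (by omega), vars_X, Finset.mem_singleton] at hil
      omega

lemma aeval_elimSubst_genC_pow_three {k : ℕ} (hk : 1 ≤ k) (hkN : k + 2 ≤ N) :
    aeval (elimSubst N) ((genC ^ 3).coeff (k : ℤ)) = 0 := by
  rw [coeff_genC_pow_three, map_add, map_mul, aeval_X, elimSubst_eq_aeval (by omega) hkN,
    Nat.add_sub_cancel, smul_eq_C_mul, ← mul_assoc, map_ofNat, ← map_ofNat C 3, ← C_mul]
  norm_num

lemma aeval_elimSubst_monomial_eq_self {d : ℕ →₀ ℕ}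
    (hd : ∀ j ∈ d.support, ¬(3 ≤ j ∧ j ≤ N)) (a : ℚ) :
    aeval (elimSubst N) (monomial d a) = monomial d a := by
  rw [aeval_monomial, monomial_eq, algebraMap_eq]
  congr 1
  exact Finsupp.prod_congr fun j hj => by rw [elimSubst_eq_X (hd j hj)]

lemma mem_support_aeval_elimSubst_monomial {d f : ℕ →₀ ℕ}
    (hd : ∀ j ∈ d.support, 3 ≤ j ∧ j ≤ N)
    (hf : f ∈ (aeval (elimSubst N) (monomial d (1 : ℚ))).support) :
    wdeg f = wdeg d ∧ ∀ j, 3 ≤ j → f j = 0 := by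
  refine ⟨?_, fun j hj => ?_⟩
  · rw [wdeg_eq_weight]
    exact ((isWeightedHomogeneous_monomial _ d 1 (wdeg_eq_weight d).symm).aeval fun i _ =>
      isWeightedHomogeneous_elimSubst N i) (mem_support_iff.mp hf)
  by_contra hfj
  obtain ⟨i, hi, hji⟩ := mem_vars_bind₁ _ _
    ((mem_vars_iff_mem_support j).mpr ⟨f, hf, Finsupp.mem_support_iff.mpr hfj⟩)
  rw [vars_monomial one_ne_zero] at hi
  have := lt_three_of_mem_vars_elimSubst (hd i hi).1 (hd i hi).2 j hji
  omega

lemma wdrlLt_of_mem_support_aeval_elimSubst_monomial {d e : ℕ →₀ ℕ}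
    (hd : ∃ j ∈ d.support, 3 ≤ j ∧ j ≤ N) (a : ℚ)
    (he : e ∈ (aeval (elimSubst N) (monomial d a)).support) : wdrlLt e d := by
  obtain ⟨d₀, d₁, rfl, hd₀, hd₁⟩ : ∃ d₀ d₁ : ℕ →₀ ℕ, d = d₀ + d₁ ∧
      (∀ j ∈ d₀.support, ¬(3 ≤ j ∧ j ≤ N)) ∧ ∀ j ∈ d₁.support, 3 ≤ j ∧ j ≤ N :=
    ⟨_, _, (Finsupp.filter_add_filter_not d _).symm.trans (add_comm _ _),
      fun j hj => (Finset.mem_filter.mp hj).2, fun j hj => (Finset.mem_filter.mp hj).2⟩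
  rw [← mul_one a, ← monomial_mul, map_mul, aeval_elimSubst_monomial_eq_self hd₀,
    mem_support_iff, coeff_monomial_mul'] at he
  split_ifs at he with hle
  · obtain ⟨f, rfl⟩ : ∃ f, e = d₀ + f := ⟨e - d₀, (add_tsub_cancel_of_le hle).symm⟩
    rw [add_tsub_cancel_left] at he
    obtain ⟨hw, hvanish⟩ := mem_support_aeval_elimSubst_monomial hd₁
      (mem_support_iff.mpr (right_ne_zero_of_mul he))
    have hd₀J : ∀ j, 3 ≤ j → j ≤ N → d₀ j = 0 := fun j h3 hN =>
      Finsupp.notMem_support_iff.mp fun hj => hd₀ j hj ⟨h3, hN⟩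
    have hd₁J : ∀ j, j < 3 → d₁ j = 0 := fun j hj =>
      Finsupp.notMem_support_iff.mp fun hj' => by have := (hd₁ j hj').1; omega
    obtain ⟨j, hj, hjJ⟩ := hd
    refine wdrlLt_of_ge_on_Iio_of_le_on_Ici 3 (by rw [wdeg_add, wdeg_add, hw]) (fun h => ?_)
      (fun i hi => ?_) (fun i hi => ?_)
    · refine Finsupp.mem_support_iff.mp hj ?_
      rw [← h, Finsupp.add_apply, hd₀J j hjJ.1 hjJ.2, hvanish j hjJ.1, add_zero]
    · simp [hd₁J i hi]
    · simp [hvanish i hi]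
  · exact absurd rfl he

end elimSubst

lemma not_isStd_of_aeval_eq_zero {g : ℕ → MvPolynomial ℕ ℚ} {IsStd : (ℕ →₀ ℕ) → Prop}
    (hstd : ∀ c (a : ℚ), IsStd c → aeval g (monomial c a) = monomial c a)
    (hlt : ∀ c (a : ℚ), ¬ IsStd c → ∀ e ∈ (aeval g (monomial c a)).support, wdrlLt e c)
    {p : MvPolynomial ℕ ℚ} (hp : aeval g p = 0) {d : ℕ →₀ ℕ} (hd : IsLeadingMonomial p d) :
    ¬ IsStd d := by
  intro hdstd
  have hcoeff : coeff d (aeval g p) = coeff d p := by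
    conv_lhs => rw [p.as_sum, map_sum, coeff_sum]
    rw [Finset.sum_eq_single_of_mem d hd.1 fun c hc hcd => ?_, hstd d _ hdstd, coeff_monomial,
      if_pos rfl]
    by_cases hc_std : IsStd c
    · rw [hstd c _ hc_std, coeff_monomial, if_neg hcd]
    · by_contra hne
      exact wdrlLt_asymm (hlt c _ hc_std d (mem_support_iff.mpr hne)) (hd.2 c hc hcd)
  rw [hp, coeff_zero] at hcoeff
  exact mem_support_iff.mp hd.1 hcoeff.symm

theorem stmt19_general (m : ℕ) :
    (∀ k : ℕ, 1 ≤ k → k ≤ m - 1 →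
      IsLeadingMonomial ((genC ^ 3).coeff (k : ℤ)) (Finsupp.single (k + 2) 1) ∧
      ((genC ^ 3).coeff (k : ℤ)).coeff (Finsupp.single (k + 2) 1) = 3) ∧
    (∀ p ∈ Ideal.span {q : MvPolynomial ℕ ℚ |
          ∃ k : ℕ, 1 ≤ k ∧ k ≤ m - 1 ∧ q = (genC ^ 3).coeff (k : ℤ)},
      p ≠ 0 → ∀ d, IsLeadingMonomial p d →
        ∃ k : ℕ, 1 ≤ k ∧ k ≤ m - 1 ∧ Finsupp.single (k + 2) 1 ≤ d) := by
  refine ⟨fun k _ _ => ⟨isLeadingMonomial_genC_pow_three k, coeff_genC_pow_three_single k⟩,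
    fun p hp _ d hd => ?_⟩
  have hker : aeval (elimSubst (m + 1)) p = 0 := by
    refine (Ideal.span_le (I := RingHom.ker (aeval (elimSubst (m + 1))))).mpr ?_ hp
    rintro q ⟨k, hk, hkm, rfl⟩
    exact aeval_elimSubst_genC_pow_three hk (by omega)
  obtain ⟨j, hj, hjJ⟩ : ∃ j ∈ d.support, 3 ≤ j ∧ j ≤ m + 1 := by
    by_contra hstd
    exact not_isStd_of_aeval_eq_zero
      (IsStd := fun c => ∀ j ∈ c.support, ¬(3 ≤ j ∧ j ≤ m + 1))
      (fun c a hc => aeval_elimSubst_monomial_eq_self hc a)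
      (fun c a hc e he => by
        push Not at hc
        exact wdrlLt_of_mem_support_aeval_elimSubst_monomial hc a he)
      hker hd (fun j hj hjJ => hstd ⟨j, hj, hjJ⟩)
  exact ⟨j - 2, by omega, by omega, by
    rw [Nat.sub_add_cancel (by omega), Finsupp.single_le_iff]
    exact Nat.one_le_iff_ne_zero.mpr (Finsupp.mem_support_iff.mp hj)⟩

/-- for the weighted degree reverse lexicographic order with weights
`w(C₋ᵢ) = i + 1`, the leading term of `Eₖ = (C³)₋ₖ` is `3·C₋₍ₖ₊₂₎`
(leading monomial `C₋₍ₖ₊₂₎` with coefficient `3`), and `{E₁, …, E_{m-1}}` is a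
Groebner basis of the ideal it generates: the leading monomial of every nonzero
element of the ideal is divisible by some `C₋₍ₖ₊₂₎`, `1 ≤ k ≤ m - 1`. -/
theorem stmt19 (m : ℕ) (hm : 3 < m) :
    (∀ k : ℕ, 1 ≤ k → k ≤ m - 1 →
      IsLeadingMonomial ((genC ^ 3).coeff (k : ℤ)) (Finsupp.single (k + 2) 1) ∧
      ((genC ^ 3).coeff (k : ℤ)).coeff (Finsupp.single (k + 2) 1) = 3) ∧
    (∀ p ∈ Ideal.span {q : MvPolynomial ℕ ℚ |
          ∃ k : ℕ, 1 ≤ k ∧ k ≤ m - 1 ∧ q = (genC ^ 3).coeff (k : ℤ)},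
      p ≠ 0 → ∀ d, IsLeadingMonomial p d →
        ∃ k : ℕ, 1 ≤ k ∧ k ≤ m - 1 ∧ Finsupp.single (k + 2) 1 ≤ d) :=
  stmt19_general m
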